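/- Every element a of Cl(p+1,q+1) also admits a left-ideal decomposition a = ā₀⁺P₊ + ā₁⁺eP₊ + ā₀⁻P₋ + ā₁⁻eP₋ with coefficients in Cl(p,q), and it relates to the right-ideal decomposition a = P₊a₀⁺ + P₊e a₁⁺ + P₋a₀⁻ + P₋e a₁⁻ by a = a₀⁺P₊ + α(a₁⁻)eP₊ + a₀⁻P₋ + α(a₁⁺)eP₋, i.e. ā₀⁺ = a₀⁺, ā₁⁺ = α(a₁⁻), ā₀⁻ = a₀⁻, ā₁⁻ = α(a₁⁺). -/
import Mathlib


open CliffordAlgebra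

/-- The right-ideal decomposition
`a = Pp a₀⁺ + Pp e a₁⁺ + Pm a₀⁻ + Pm e a₁⁻` yields the left-ideal decomposition
`a = a₀⁺ Pp + α(a₁⁻) e Pp + a₀⁻ Pm + α(a₁⁺) e Pm` (`f` plays the role of `ẽ`);
in particular all left coefficients again lie in the subalgebra `S`. -/
theorem stmt19 {K V : Type*} [Field K] [AddCommGroup V] [Module K V]
    (hK : (2 : K) ≠ 0) (Q : QuadraticForm K V) (e f : V)
    (he : Q e = 1) (hf : Q f = -1) (horth : QuadraticMap.polar Q e f = 0)
    (S : Subalgebra K (CliffordAlgebra Q))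
    (hS : S = Algebra.adjoin K (ι Q '' 
      {v : V | QuadraticMap.polar Q v e = 0 ∧ QuadraticMap.polar Q v f = 0}))
    (E T Pp Pm : CliffordAlgebra Q)
    (hE : E = ι Q e) (hT : T = ι Q f)
    (hPp : Pp = (2 : K)⁻¹ • (1 + T * E)) (hPm : Pm = (2 : K)⁻¹ • (1 - T * E))
    (a0p a1p a0m a1m : CliffordAlgebra Q)
    (ha0p : a0p ∈ S) (ha1p : a1p ∈ S) (ha0m : a0m ∈ S) (ha1m : a1m ∈ S)
    (a : CliffordAlgebra Q)
    (ha : a = Pp * a0p + Pp * E * a1p + Pm * a0m + Pm * E * a1m) :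
    a = a0p * Pp + involute a1m * E * Pp + a0m * Pm + involute a1p * E * Pm ∧
    involute a1m ∈ S ∧ involute a1p ∈ S := by
  -- involute preserves S
  have invS : ∀ s ∈ S, involute s ∈ S := by
    intro s hs
    rw [hS] at hs ⊢
    induction hs using Algebra.adjoin_induction with
    | mem x hx =>
        obtain ⟨v, hv, rfl⟩ := hx
        rw [involute_ι]
        exact neg_mem (Algebra.subset_adjoin ⟨v, hv, rfl⟩)
    | algebraMap r => simpa using Subalgebra.algebraMap_mem _ r
    | add x y hx hy ihx ihy => rw [map_add]; exact add_mem ihx ihy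
    | mul x y hx hy ihx ihy => rw [map_mul]; exact mul_mem ihx ihy
  -- swap rule for vectors e, f
  have key : ∀ w : V, (w = e ∨ w = f) → ∀ s ∈ S, ι Q w * s = involute s * ι Q w := by
    intro w hw s hs
    rw [hS] at hs
    induction hs using Algebra.adjoin_induction with
    | mem x hx =>
        obtain ⟨v, ⟨hv1, hv2⟩, rfl⟩ := hx
        have h := ι_mul_ι_add_swap (Q := Q) v w
        have hp : QuadraticMap.polar Q v w = 0 := by
          rcases hw with rfl | rfl <;> assumption
        rw [hp, map_zero] at h
        rw [involute_ι, neg_mul, eq_neg_iff_add_eq_zero]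
        rw [add_comm] at h
        exact h
    | algebraMap r => rw [involute.commutes]; exact (Algebra.commutes r _).symm
    | add x y hx hy ihx ihy => rw [map_add, mul_add, add_mul, ihx, ihy]
    | mul x y hx hy ihx ihy =>
        rw [map_mul, ← mul_assoc, ihx, mul_assoc, ihy, ← mul_assoc]
  have hEs : ∀ s ∈ S, E * s = involute s * E := by
    intro s hs; rw [hE]; exact key e (Or.inl rfl) s hs
  have hTs : ∀ s ∈ S, T * s = involute s * T := by
    intro s hs; rw [hT]; exact key f (Or.inr rfl) s hs
  -- S commutes with T*E
  have hTEs : ∀ s ∈ S, T * E * s = s * (T * E) := by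
    intro s hs
    rw [mul_assoc, hEs s hs, ← mul_assoc, hTs _ (invS s hs), involute_involute,
      mul_assoc]
  have hPps : ∀ s ∈ S, Pp * s = s * Pp := by
    intro s hs
    rw [hPp, smul_mul_assoc, mul_smul_comm, add_mul, mul_add, one_mul, mul_one,
      hTEs s hs]
  have hPms : ∀ s ∈ S, Pm * s = s * Pm := by
    intro s hs
    rw [hPm, smul_mul_assoc, mul_smul_comm, sub_mul, mul_sub, one_mul, mul_one,
      hTEs s hs]
  -- E * T = - (T * E)
  have hET : E * T = -(T * E) := by
    have h := ι_mul_ι_add_swap (Q := Q) e f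
    rw [horth, map_zero] at h
    rw [hE, hT, eq_neg_iff_add_eq_zero, h]
  have hEE : E * E = 1 := by
    rw [hE, ι_sq_scalar, he, map_one]
  have hPpE : Pp * E = E * Pm := by
    rw [hPp, hPm, smul_mul_assoc, mul_smul_comm, add_mul, one_mul, mul_sub, mul_one,
      mul_assoc, hEE, mul_one, ← mul_assoc, hET, neg_mul, mul_assoc, hEE, mul_one,
      sub_neg_eq_add]
  have hPmE : Pm * E = E * Pp := by
    rw [hPp, hPm, smul_mul_assoc, mul_smul_comm, sub_mul, one_mul, mul_add, mul_one,
      mul_assoc, hEE, mul_one, ← mul_assoc, hET, neg_mul, mul_assoc, hEE, mul_one,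
      sub_eq_add_neg]
  refine ⟨?_, invS _ ha1m, invS _ ha1p⟩
  rw [ha, hPps _ ha0p, hPms _ ha0m, hPpE, hPmE, mul_assoc E Pm a1p,
    hPms _ ha1p, mul_assoc E Pp a1m, hPps _ ha1m, ← mul_assoc E a1p,
    ← mul_assoc E a1m, hEs _ ha1p, hEs _ ha1m]
  abel
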